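/- arXiv:2103.05931 — 3 statements merged into one kernel-verified Lean document; each statement's English description precedes it below -/
import Mathlib

section
/- Let (X, d) be a metric space, w : X → ℝ with w(x) ≥ 0 for all x, and 0 < ε ≤ 1. Let p, q, r, c, p_ℓ, q_ℓ, c_ℓ ∈ X satisfy: (i) d(p, r) + d(r, q) = d(p, q); (ii) d(p, p_ℓ) ≤ d(p, r) and d(q, q_ℓ) ≤ d(q, r); (iii) w(c) + d(c, c_ℓ) ≤ w(p) + d(p, p_ℓ); (iv) d(p_ℓ, c_ℓ) ≤ (ε/4)·d(p_ℓ, q_ℓ). Then (w(p) + d(p, c) + w(c)) + (w(c) + d(c, q) + w(q)) ≤ (6 + ε)·(w(p) + d(p, q) + w(q)). -/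
/-! Going from `p` to `c` costs at most `d(p, p_ℓ) + d(p_ℓ, c_ℓ) + d(c_ℓ, c)`, and returning to `p`
before heading to `q` turns the detour `p → c → q` into `d(p, q)` plus twice that cost. The weight of
`c` and the leg `d(c_ℓ, c)` are paid for by `w(p) + d(p, p_ℓ)`, the projection distance `d(p, p_ℓ)` is
at most `d(p, q)` because `r` lies on a shortest `p`–`q` path, and by semi-separation `d(p_ℓ, c_ℓ)` is
at most `(ε/4) d(p_ℓ, q_ℓ) ≤ (ε/2) d(p, q)`. -/

section

variable {X : Type*} [PseudoMetricSpace X]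

lemma dist_add_dist_le_dist_add_two_mul {p q c pl cl : X} :
    dist p c + dist c q ≤ dist p q + 2 * (dist p pl + dist pl cl + dist c cl) := by
  have hpc : dist p c ≤ dist p pl + dist pl cl + dist cl c := dist_triangle4 p pl cl c
  have hcq : dist c q ≤ dist c p + dist p q := dist_triangle c p q
  rw [dist_comm cl c] at hpc
  rw [dist_comm c p] at hcq
  linarith

lemma dist_le_of_dist_add_dist_eq {p q r pl : X} (hr : dist p r + dist r q = dist p q)
    (hp : dist p pl ≤ dist p r) : dist p pl ≤ dist p q := by
  linarith [dist_nonneg (x := r) (y := q)]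

lemma dist_le_two_mul_of_dist_add_dist_eq {p q r pl ql : X}
    (hr : dist p r + dist r q = dist p q) (hp : dist p pl ≤ dist p r)
    (hq : dist q ql ≤ dist q r) : dist pl ql ≤ 2 * dist p q := by
  have h : dist pl ql ≤ dist pl p + dist p q + dist q ql := dist_triangle4 pl p q ql
  rw [dist_comm pl p] at h
  linarith [dist_comm r q]

end

theorem stmt6_general {X : Type*} [MetricSpace X] (w : X → ℝ) (hw : ∀ x, 0 ≤ w x)
    (ε : ℝ) (hε0 : 0 < ε) (p q r c pl ql cl : X)
    (hr : dist p r + dist r q = dist p q)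
    (hp : dist p pl ≤ dist p r)
    (hq : dist q ql ≤ dist q r)
    (hc : w c + dist c cl ≤ w p + dist p pl)
    (hsep : dist pl cl ≤ (ε / 4) * dist pl ql) :
    (w p + dist p c + w c) + (w c + dist c q + w q) ≤
      (6 + ε) * (w p + dist p q + w q) := by
  have hdetour := dist_add_dist_le_dist_add_two_mul (p := p) (q := q) (c := c) (pl := pl) (cl := cl)
  have hpl : dist p pl ≤ dist p q := dist_le_of_dist_add_dist_eq hr hp
  have hsep' : dist pl cl ≤ ε / 2 * dist p q :=
    calc dist pl cl ≤ ε / 4 * dist pl ql := hsep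
      _ ≤ ε / 4 * (2 * dist p q) := by
        gcongr; exact dist_le_two_mul_of_dist_add_dist_eq hr hp hq
      _ = ε / 2 * dist p q := by ring
  have hεwp : 0 ≤ ε * w p := mul_nonneg hε0.le (hw p)
  have hεwq : 0 ≤ ε * w q := mul_nonneg hε0.le (hw q)
  have hεd : 0 ≤ ε * dist p q := mul_nonneg hε0.le dist_nonneg
  nlinarith [hw p, hw q]

/-- The core stretch-factor bound from Lemma 3 (polygonal domain / terrain spanner):
under the geodesic-crossing, projection, representative-point, and semi-separation
hypotheses, the two-edge detour through `c` has weighted length at most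
`(6 + ε)` times the weighted distance between `p` and `q`. -/
theorem stmt6 {X : Type*} [MetricSpace X] (w : X → ℝ) (hw : ∀ x, 0 ≤ w x)
    (ε : ℝ) (hε0 : 0 < ε) (hε1 : ε ≤ 1) (p q r c pl ql cl : X)
    (hr : dist p r + dist r q = dist p q)
    (hp : dist p pl ≤ dist p r)
    (hq : dist q ql ≤ dist q r)
    (hc : w c + dist c cl ≤ w p + dist p pl)
    (hsep : dist pl cl ≤ (ε / 4) * dist pl ql) :
    (w p + dist p c + w c) + (w c + dist c q + w q) ≤
      (6 + ε) * (w p + dist p q + w q) :=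
  stmt6_general w hw ε hε0 p q r c pl ql cl hr hp hq hc hsep
end

section
/- Let (X, d) be a metric space and w : X → ℝ with w(x) ≥ 0 for all x. Let p, q, r, p_γ, q_γ ∈ X satisfy: d(p, r) + d(r, q) = d(p, q), d(p, p_γ) ≤ d(p, r), and d(q, q_γ) ≤ d(q, r). Then (w(p) + d(p, p_γ)) + d(p_γ, q_γ) + (w(q) + d(q, q_γ)) ≤ 3·(w(p) + d(p, q) + w(q)). -/
/-! Moving the endpoints of `pq` to `pγ, qγ` costs at most `d(p, pγ) + d(q, qγ)` by the triangle
inequality, and this sum is at most `d(p, r) + d(r, q) = d(p, q)` because `r` lies between `p`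
and `q`. Hence the left side is at most `w(p) + w(q) + 3·d(p, q)`. -/

lemma dist_add_dist_le_of_dist_add_dist_eq {X : Type*} [PseudoMetricSpace X] {p q r p' q' : X}
    (hr : dist p r + dist r q = dist p q) (hp : dist p p' ≤ dist p r)
    (hq : dist q q' ≤ dist q r) :
    dist p p' + dist q q' ≤ dist p q := by
  rw [← hr, dist_comm r q]
  exact add_le_add hp hq

lemma dist_le_dist_add_dist_add_dist {X : Type*} [PseudoMetricSpace X] (p q p' q' : X) :
    dist p' q' ≤ dist p q + dist p p' + dist q q' := by
  have := dist_triangle4 p' p q q'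
  rw [dist_comm p' p] at this
  linarith

/-- Key inequality in Lemma 4 (terrain lifting lemma): with `p_γ, q_γ` the
projections of `p, q` onto the separator shortest path and `r` the crossing
point, `d_{w'}(p_γ, q_γ) ≤ 3·d_w(p, q)` where `w'(x_γ) = w(x) + d(x, x_γ)`. -/
theorem stmt9 {X : Type*} [MetricSpace X] (w : X → ℝ) (hw : ∀ x, 0 ≤ w x)
    (p q r pγ qγ : X)
    (hr : dist p r + dist r q = dist p q)
    (hp : dist p pγ ≤ dist p r)
    (hq : dist q qγ ≤ dist q r) :
    (w p + dist p pγ) + dist pγ qγ + (w q + dist q qγ) ≤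
      3 * (w p + dist p q + w q) := by
  have hmove := dist_le_dist_add_dist_add_dist p q pγ qγ
  have hproj := dist_add_dist_le_of_dist_add_dist_eq hr hp hq
  linarith [hw p, hw q]
end

section
/- Let (X, d) be a metric space, w : X → ℝ with w(x) ≥ 0 for all x, π : X → X a map (assigning to each point a projection), and define w′ : X → ℝ by w′(x) = w(x) + d(x, π(x)). Let t ≥ 0, let p, q, r ∈ X satisfy d(p, r) + d(r, q) = d(p, q), d(p, π(p)) ≤ d(p, r), and d(q, π(q)) ≤ d(q, r), and let x_0 = p, x_1, …, x_m = q be a finite sequence of points of X such that Σ_{i=0}^{m−1} [w′(x_i) + d(π(x_i), π(x_{i+1})) + w′(x_{i+1})] ≤ t·[w′(p) + d(π(p), π(q)) + w′(q)]. Then Σ_{i=0}^{m−1} [w(x_i) + d(x_i, x_{i+1}) + w(x_{i+1})] ≤ 3t·(w(p) + d(p, q) + w(q)). -/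
/-!
Each edge of the lifted path is shorter than the corresponding projected edge, by the triangle
inequality through the two projections. The projected target distance is in turn at most three
times `d_w(p, q)`: the detours `d(p, π p)` and `d(q, π q)` are paid twice, and together they are
at most `d(p, r) + d(r, q) = d(p, q)` since `r` lies on a shortest `p`–`q` path.
-/

section Projection

variable {X : Type*} [PseudoMetricSpace X] (π : X → X)

lemma dist_le_dist_map_add_dist_map (a b : X) :
    dist a b ≤ dist a (π a) + dist (π a) (π b) + dist b (π b) := by
  simpa only [dist_comm (π b) b, dist_comm (π a) a] using dist_triangle4 a (π a) (π b) b

lemma weighted_dist_le_weighted_dist_map (w : X → ℝ) (a b : X) :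
    w a + dist a b + w b ≤
      (w a + dist a (π a)) + dist (π a) (π b) + (w b + dist b (π b)) := by
  linarith [dist_le_dist_map_add_dist_map π a b]

lemma dist_map_add_dist_map_le_of_dist_add_dist_eq {p q r : X}
    (hr : dist p r + dist r q = dist p q)
    (hp : dist p (π p) ≤ dist p r) (hq : dist q (π q) ≤ dist q r) :
    dist p (π p) + dist q (π q) ≤ dist p q := by
  linarith [dist_comm q r]

lemma weighted_dist_map_le_three_mul {w : X → ℝ} {p q r : X} (hwp : 0 ≤ w p) (hwq : 0 ≤ w q)
    (hr : dist p r + dist r q = dist p q)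
    (hp : dist p (π p) ≤ dist p r) (hq : dist q (π q) ≤ dist q r) :
    (w p + dist p (π p)) + dist (π p) (π q) + (w q + dist q (π q)) ≤
      3 * (w p + dist p q + w q) := by
  have hmap : dist (π p) (π q) ≤ dist p (π p) + dist p q + dist q (π q) := by
    simpa only [dist_comm (π p) p] using dist_triangle4 (π p) p q (π q)
  linarith [dist_map_add_dist_map_le_of_dist_add_dist_eq π hr hp hq]

end Projection

theorem stmt10_general {X : Type*} [MetricSpace X] (w : X → ℝ) (hw : ∀ x, 0 ≤ w x)
    (π : X → X) (w' : X → ℝ) (hw' : ∀ x, w' x = w x + dist x (π x))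
    (t : ℝ) (ht : 0 ≤ t) (p q r : X)
    (hr : dist p r + dist r q = dist p q)
    (hp : dist p (π p) ≤ dist p r)
    (hq : dist q (π q) ≤ dist q r)
    (m : ℕ) (x : ℕ → X)
    (hsum : ∑ i ∈ Finset.range m,
        (w' (x i) + dist (π (x i)) (π (x (i + 1))) + w' (x (i + 1))) ≤
      t * (w' p + dist (π p) (π q) + w' q)) :
    ∑ i ∈ Finset.range m, (w (x i) + dist (x i) (x (i + 1)) + w (x (i + 1))) ≤
      3 * t * (w p + dist p q + w q) := by
  simp only [hw'] at hsum
  calc ∑ i ∈ Finset.range m, (w (x i) + dist (x i) (x (i + 1)) + w (x (i + 1)))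
      ≤ ∑ i ∈ Finset.range m, ((w (x i) + dist (x i) (π (x i))) + dist (π (x i)) (π (x (i + 1)))
          + (w (x (i + 1)) + dist (x (i + 1)) (π (x (i + 1))))) :=
        Finset.sum_le_sum fun i _ => weighted_dist_le_weighted_dist_map π w (x i) (x (i + 1))
    _ ≤ t * ((w p + dist p (π p)) + dist (π p) (π q) + (w q + dist q (π q))) := hsum
    _ ≤ t * (3 * (w p + dist p q + w q)) :=
        mul_le_mul_of_nonneg_left (weighted_dist_map_le_three_mul π (hw p) (hw q) hr hp hq) ht
    _ = 3 * t * (w p + dist p q + w q) := by ring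

/-- Lemma 4 of the paper (lifting a spanner path on the separator back to the
terrain): a path `π(x_0), …, π(x_m)` between the projections `π(p)` and `π(q)`
whose weighted length (with respect to the restricted weights
`w'(x) = w(x) + d(x, π(x))`) is at most `t·d_{w'}(π(p), π(q))` lifts to a path
`x_0 = p, …, x_m = q` of weighted length at most `3t·d_w(p, q)`. -/
theorem stmt10 {X : Type*} [MetricSpace X] (w : X → ℝ) (hw : ∀ x, 0 ≤ w x)
    (π : X → X) (w' : X → ℝ) (hw' : ∀ x, w' x = w x + dist x (π x))
    (t : ℝ) (ht : 0 ≤ t) (p q r : X)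
    (hr : dist p r + dist r q = dist p q)
    (hp : dist p (π p) ≤ dist p r)
    (hq : dist q (π q) ≤ dist q r)
    (m : ℕ) (x : ℕ → X) (hx0 : x 0 = p) (hxm : x m = q)
    (hsum : ∑ i ∈ Finset.range m,
        (w' (x i) + dist (π (x i)) (π (x (i + 1))) + w' (x (i + 1))) ≤
      t * (w' p + dist (π p) (π q) + w' q)) :
    ∑ i ∈ Finset.range m, (w (x i) + dist (x i) (x (i + 1)) + w (x (i + 1))) ≤
      3 * t * (w p + dist p q + w q) :=
  stmt10_general w hw π w' hw' t ht p q r hr hp hq m x hsum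
end
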